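/- Let X, Y be Banach spaces and let Z ⊆ L(X,Y) be an operator ideal, i.e., a closed subspace containing all finite-rank operators such that A∘T∘B ∈ Z whenever A ∈ L(Y), T ∈ Z, B ∈ L(X). Then, endowing Z with the operator norm, n(Z) ≤ min{ n(X), n(Y) }. -/

import Mathlib

open Metric Set

/-- The numerical radius of a bounded linear operator `T` on a normed space `X` over `𝕜`:
`v(T) = sup { ‖x*(Tx)‖ : x ∈ S_X, x* ∈ S_{X*}, x*(x) = 1 }`. -/
noncomputable def numRadius (𝕜 : Type*) [RCLike 𝕜] {X : Type*} [NormedAddCommGroup X]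
    [NormedSpace 𝕜 X] (T : X →L[𝕜] X) : ℝ :=
  sSup {r : ℝ | ∃ (x : X) (f : X →L[𝕜] 𝕜), ‖x‖ = 1 ∧ ‖f‖ = 1 ∧ f x = 1 ∧ r = ‖f (T x)‖}

/-- The numerical index of a normed space: `n(X) = inf { v(T) : T ∈ L(X), ‖T‖ = 1 }`. -/
noncomputable def numIndex (𝕜 : Type*) [RCLike 𝕜] (X : Type*) [NormedAddCommGroup X]
    [NormedSpace 𝕜 X] : ℝ :=
  sInf {r : ℝ | ∃ T : X →L[𝕜] X, ‖T‖ = 1 ∧ r = numRadius 𝕜 T}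

/-- `v_δ(T)` computed with points taken in `A ⊆ B_X` and functionals in `B ⊆ B_{X*}`. -/
noncomputable def numRadiusDeltaOn (𝕜 : Type*) [RCLike 𝕜] {X : Type*} [NormedAddCommGroup X]
    [NormedSpace 𝕜 X] (T : X →L[𝕜] X) (A : Set X) (B : Set (X →L[𝕜] 𝕜)) (δ : ℝ) : ℝ :=
  sSup {r : ℝ | ∃ x ∈ A, ∃ f ∈ B, 1 - δ < RCLike.re (f x) ∧ r = ‖f (T x)‖}

/-- `Z` (together with the bounded bilinear map `t`) is the projective tensor product
`X ⊗̂_π Y`: it is complete, elementary tensors have norm `‖x‖‖y‖`, and the closed unit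
ball of `Z` is the closed convex hull of `B_X ⊗ B_Y`. -/
structure IsProjectiveTensorProduct (𝕜 : Type*) [RCLike 𝕜] {X Y Z : Type*}
    [NormedAddCommGroup X] [NormedSpace 𝕜 X] [NormedAddCommGroup Y] [NormedSpace 𝕜 Y]
    [NormedAddCommGroup Z] [NormedSpace 𝕜 Z] [NormedSpace ℝ Z] [IsScalarTower ℝ 𝕜 Z]
    (t : X →L[𝕜] Y →L[𝕜] Z) : Prop where
  complete : CompleteSpace Z
  norm_tmul : ∀ x y, ‖t x y‖ = ‖x‖ * ‖y‖
  ball_eq : closedBall (0 : Z) 1 = closure (convexHull ℝ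
      {z : Z | ∃ x ∈ closedBall (0 : X) 1, ∃ y ∈ closedBall (0 : Y) 1, z = t x y})

/-- `Z` (together with the bounded bilinear map `t`) is the injective tensor product
`X ⊗̂_ε Y`: it is complete, the span of elementary tensors is dense, and on that span
the norm is the injective tensor norm. -/
structure IsInjectiveTensorProduct (𝕜 : Type*) [RCLike 𝕜] {X Y Z : Type*}
    [NormedAddCommGroup X] [NormedSpace 𝕜 X] [NormedAddCommGroup Y] [NormedSpace 𝕜 Y]
    [NormedAddCommGroup Z] [NormedSpace 𝕜 Z] (t : X →L[𝕜] Y →L[𝕜] Z) : Prop where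
  complete : CompleteSpace Z
  dense_span : Dense (Submodule.span 𝕜 {z : Z | ∃ x y, z = t x y} : Set Z)
  norm_sum : ∀ (n : ℕ) (x : Fin n → X) (y : Fin n → Y),
    ‖∑ i, t (x i) (y i)‖ = sSup {r : ℝ | ∃ (f : X →L[𝕜] 𝕜) (g : Y →L[𝕜] 𝕜),
      ‖f‖ ≤ 1 ∧ ‖g‖ ≤ 1 ∧ r = ‖∑ i, f (x i) * g (y i)‖}

/-- A slice of a bounded set `A`: `{a ∈ A : Re f(a) > sup Re f(A) - δ}`. -/
def sliceOf (𝕜 : Type*) [RCLike 𝕜] {X : Type*} [NormedAddCommGroup X] [NormedSpace 𝕜 X]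
    (A : Set X) (f : X →L[𝕜] 𝕜) (δ : ℝ) : Set X :=
  {a ∈ A | sSup {r : ℝ | ∃ b ∈ A, r = RCLike.re (f b)} - δ < RCLike.re (f a)}

/-- A set `A` is slicely countably determined (SCD) if there is a countable determining
family of slices of `A`: any `B ⊆ A` meeting every slice of the family has
closed convex hull containing `A`. -/
def IsSCD (𝕜 : Type*) [RCLike 𝕜] {X : Type*} [NormedAddCommGroup X] [NormedSpace 𝕜 X]
    [NormedSpace ℝ X] [IsScalarTower ℝ 𝕜 X] (A : Set X) : Prop :=
  ∃ V : ℕ → Set X, (∀ n, ∃ (f : X →L[𝕜] 𝕜) (δ : ℝ), 0 < δ ∧ V n = sliceOf 𝕜 A f δ) ∧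
    ∀ B ⊆ A, (∀ n, (B ∩ V n).Nonempty) → A ⊆ closure (convexHull ℝ B)

/-- The Daugavet property: `‖Id + T‖ = 1 + ‖T‖` for every rank-one operator `T`. -/
def DaugavetProperty (𝕜 : Type*) [RCLike 𝕜] (X : Type*) [NormedAddCommGroup X]
    [NormedSpace 𝕜 X] : Prop :=
  ∀ T : X →L[𝕜] X, (∃ (f : X →L[𝕜] 𝕜) (x₀ : X), ∀ x, T x = f x • x₀) →
    ‖ContinuousLinearMap.id 𝕜 X + T‖ = 1 + ‖T‖

/-!
For `B ∈ L(X)` with `‖B‖ = 1`, right composition `T ↦ T ∘ B` is an operator of norm one on `Z`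
(rank-one operators in `Z` see the whole norm of `B`), and its numerical radius is at most `v(B)`:
given `‖T‖ = 1 = φ T` with `‖φ‖ = 1`, the functional `C ↦ φ (T ∘ C)` is a state of `L(X)`, and
every state `ψ` satisfies `|ψ B| ≤ v(B)`. Hence `n(Z) ≤ v(B)`, i.e. `n(Z) ≤ n(X)`; left
composition gives `n(Z) ≤ n(Y)` in the same way. The bound on states comes from
`‖Id + s C‖ ≤ 1 + s v(C) + O(s²)`, letting `s → 0⁺` in `1 + s Re ψ C = Re ψ (Id + s C)`.
-/

open ContinuousLinearMap

section NumericalRadius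

variable {𝕜 E : Type*} [RCLike 𝕜] [NormedAddCommGroup E] [NormedSpace 𝕜 E]

theorem numRadius_nonneg (T : E →L[𝕜] E) : 0 ≤ numRadius 𝕜 T :=
  Real.sSup_nonneg (by rintro r ⟨x, f, -, -, -, rfl⟩; positivity)

theorem norm_apply_apply_le_norm (T : E →L[𝕜] E) {x : E} {f : E →L[𝕜] 𝕜}
    (hx : ‖x‖ = 1) (hf : ‖f‖ = 1) : ‖f (T x)‖ ≤ ‖T‖ := by
  simpa [hf] using f.le_opNorm_of_le (T.le_opNorm_of_le hx.le)

theorem numRadius_le_of_forall {T : E →L[𝕜] E} {c : ℝ} (hc : 0 ≤ c)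
    (h : ∀ (x : E) (f : E →L[𝕜] 𝕜), ‖x‖ = 1 → ‖f‖ = 1 → f x = 1 → ‖f (T x)‖ ≤ c) :
    numRadius 𝕜 T ≤ c :=
  Real.sSup_le (by rintro r ⟨x, f, hx, hf, hfx, rfl⟩; exact h x f hx hf hfx) hc

theorem numRadius_le_norm (T : E →L[𝕜] E) : numRadius 𝕜 T ≤ ‖T‖ :=
  numRadius_le_of_forall (norm_nonneg T) fun _ _ hx hf _ ↦ norm_apply_apply_le_norm T hx hf

theorem norm_apply_apply_le_numRadius (T : E →L[𝕜] E) {x : E} {f : E →L[𝕜] 𝕜}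
    (hx : ‖x‖ = 1) (hf : ‖f‖ = 1) (hfx : f x = 1) : ‖f (T x)‖ ≤ numRadius 𝕜 T :=
  le_csSup ⟨‖T‖, by rintro r ⟨x, f, hx, hf, -, rfl⟩; exact norm_apply_apply_le_norm T hx hf⟩
    ⟨x, f, hx, hf, hfx, rfl⟩

theorem numRadius_smul_le (c : 𝕜) (T : E →L[𝕜] E) :
    numRadius 𝕜 (c • T) ≤ ‖c‖ * numRadius 𝕜 T :=
  numRadius_le_of_forall (by have := numRadius_nonneg T; positivity) fun x f hx hf hfx ↦ by
    rw [smul_apply, map_smul, smul_eq_mul, norm_mul]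
    gcongr
    exact norm_apply_apply_le_numRadius T hx hf hfx

theorem norm_apply_apply_le_numRadius_mul_norm (T : E →L[𝕜] E) {w : E} {f : E →L[𝕜] 𝕜}
    (hf : ‖f‖ = 1) (hfw : f w = ‖w‖) : ‖f (T w)‖ ≤ numRadius 𝕜 T * ‖w‖ := by
  rcases eq_or_ne w 0 with rfl | hw
  · simp
  have hw' : (‖w‖ : 𝕜) ≠ 0 := by simpa using hw
  have hfx : f ((‖w‖⁻¹ : 𝕜) • w) = 1 := by simp [hfw, hw']
  have hfTw : f (T w) = ‖w‖ * f (T ((‖w‖⁻¹ : 𝕜) • w)) := by simp [hw']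
  rw [hfTw, norm_mul, RCLike.norm_ofReal, abs_norm, mul_comm]
  gcongr
  exact norm_apply_apply_le_numRadius T (norm_smul_inv_norm hw) hf hfx

theorem numIndex_nonneg : 0 ≤ numIndex 𝕜 E :=
  Real.sInf_nonneg (by rintro r ⟨T, -, rfl⟩; exact numRadius_nonneg T)

theorem numIndex_le_numRadius {T : E →L[𝕜] E} (hT : ‖T‖ = 1) : numIndex 𝕜 E ≤ numRadius 𝕜 T :=
  csInf_le ⟨0, by rintro r ⟨T, -, rfl⟩; exact numRadius_nonneg T⟩ ⟨T, hT, rfl⟩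

theorem numIndex_eq_zero_of_subsingleton [Subsingleton E] : numIndex 𝕜 E = 0 := by
  simp [numIndex]

theorem numIndex_le_numIndex_of_forall_exists {V : Type*} [NormedAddCommGroup V]
    [NormedSpace 𝕜 V] [Nontrivial V]
    (h : ∀ B : V →L[𝕜] V, ‖B‖ = 1 → ∃ Φ : E →L[𝕜] E, ‖Φ‖ = 1 ∧ numRadius 𝕜 Φ ≤ numRadius 𝕜 B) :
    numIndex 𝕜 E ≤ numIndex 𝕜 V := by
  refine le_csInf ⟨_, ContinuousLinearMap.id 𝕜 V, norm_id, rfl⟩ ?_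
  rintro _ ⟨B, hB, rfl⟩
  obtain ⟨Φ, hΦ, hΦB⟩ := h B hB
  exact (numIndex_le_numRadius hΦ).trans hΦB

end NumericalRadius

theorem RCLike.exists_norm_le_one_mul_eq_norm {𝕜 : Type*} [RCLike 𝕜] (z : 𝕜) :
    ∃ l : 𝕜, ‖l‖ ≤ 1 ∧ l * z = ‖z‖ := by
  refine ⟨starRingEnd 𝕜 z / ‖z‖, ?_, ?_⟩
  · rw [norm_div, RCLike.norm_conj, RCLike.norm_ofReal, abs_norm]
    exact div_self_le_one _
  · rw [div_mul_eq_mul_div, RCLike.conj_mul]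
    rcases eq_or_ne z 0 with rfl | hz
    · simp
    have : (‖z‖ : 𝕜) ≠ 0 := by simpa using hz
    field_simp

theorem exists_norm_eq_one (𝕜 E : Type*) [RCLike 𝕜] [NormedAddCommGroup E] [NormedSpace 𝕜 E]
    [Nontrivial E] : ∃ x : E, ‖x‖ = 1 :=
  let ⟨_, hx⟩ := exists_ne (0 : E)
  ⟨_, norm_smul_inv_norm (𝕜 := 𝕜) hx⟩

section States

variable {𝕜 E : Type*} [RCLike 𝕜] [NormedAddCommGroup E] [NormedSpace 𝕜 E]

theorem norm_id_add_smul_le (C : E →L[𝕜] E) {s : ℝ} (hs : 0 ≤ s) :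
    ‖ContinuousLinearMap.id 𝕜 E + (s : 𝕜) • C‖ ≤
      1 + s * numRadius 𝕜 C + 2 * s ^ 2 * ‖C‖ ^ 2 := by
  have hv := numRadius_nonneg C
  have hvC := numRadius_le_norm C
  refine opNorm_le_bound _ (by positivity) fun u ↦ ?_
  set w := u + (s : 𝕜) • C u
  change ‖w‖ ≤ _
  rcases eq_or_ne w 0 with hw | hw
  · rw [hw, norm_zero]; positivity
  obtain ⟨f, hf, hfw⟩ := exists_dual_vector 𝕜 w (norm_ne_zero_iff.mpr hw)
  -- `C u = C w - s C (C u)`, and `f (C w)` is controlled by `v(C)` since `f` norms `w`.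
  have hsplit : ‖w‖ = RCLike.re (f u) + s * RCLike.re (f (C w))
      - s ^ 2 * RCLike.re (f (C (C u))) := by
    have h : (‖w‖ : 𝕜) = f u + s * f (C w) - ((s ^ 2 : ℝ) : 𝕜) * f (C (C u)) := by
      rw [← hfw]; simp only [w, map_add, map_smul, smul_eq_mul]; push_cast; ring
    have h := congrArg RCLike.re h
    rwa [RCLike.ofReal_re, map_sub, map_add, RCLike.re_ofReal_mul, RCLike.re_ofReal_mul] at h
  have hu : RCLike.re (f u) ≤ ‖u‖ :=
    (RCLike.re_le_norm _).trans (by simpa [hf] using f.le_opNorm u)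
  have hCw : RCLike.re (f (C w)) ≤ numRadius 𝕜 C * ‖w‖ :=
    (RCLike.re_le_norm _).trans (norm_apply_apply_le_numRadius_mul_norm C hf hfw)
  have hCCu : -RCLike.re (f (C (C u))) ≤ ‖C‖ ^ 2 * ‖u‖ := by
    calc -RCLike.re (f (C (C u))) ≤ ‖f (C (C u))‖ := by
          simpa using RCLike.re_le_norm (-f (C (C u)))
      _ ≤ ‖C‖ * (‖C‖ * ‖u‖) := by
          simpa [hf] using f.le_opNorm_of_le (C.le_opNorm_of_le (C.le_opNorm u))
      _ = ‖C‖ ^ 2 * ‖u‖ := by ring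
  have hw_le : ‖w‖ ≤ (1 + s * ‖C‖) * ‖u‖ := by
    calc ‖w‖ ≤ ‖u‖ + s * (‖C‖ * ‖u‖) := by
          refine (norm_add_le _ _).trans ?_
          rw [norm_smul, RCLike.norm_ofReal, abs_of_nonneg hs]
          gcongr
          exact C.le_opNorm u
      _ = (1 + s * ‖C‖) * ‖u‖ := by ring
  nlinarith [mul_le_mul_of_nonneg_left hCw hs, mul_le_mul_of_nonneg_left hCCu (sq_nonneg s),
    mul_le_mul_of_nonneg_left hw_le (mul_nonneg hs hv),
    mul_le_mul_of_nonneg_left hvC (mul_nonneg (mul_nonneg (sq_nonneg s) (norm_nonneg C))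
      (norm_nonneg u))]

structure IsState (ψ : (E →L[𝕜] E) →L[𝕜] 𝕜) : Prop where
  norm_le_one : ‖ψ‖ ≤ 1
  map_id : ψ (ContinuousLinearMap.id 𝕜 E) = 1

namespace IsState

variable {ψ : (E →L[𝕜] E) →L[𝕜] 𝕜}

theorem re_apply_le_numRadius (hψ : IsState ψ) (C : E →L[𝕜] E) :
    RCLike.re (ψ C) ≤ numRadius 𝕜 C := by
  have key : ∀ s : ℝ, 0 < s → RCLike.re (ψ C) ≤ numRadius 𝕜 C + s * (2 * ‖C‖ ^ 2) := by
    intro s hs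
    have : 1 + s * RCLike.re (ψ C) ≤ 1 + s * numRadius 𝕜 C + 2 * s ^ 2 * ‖C‖ ^ 2 :=
      calc 1 + s * RCLike.re (ψ C) = RCLike.re (ψ (ContinuousLinearMap.id 𝕜 E + (s : 𝕜) • C)) := by
            simp [hψ.map_id]
        _ ≤ ‖ContinuousLinearMap.id 𝕜 E + (s : 𝕜) • C‖ :=
            (RCLike.re_le_norm _).trans ((ψ.le_of_opNorm_le hψ.norm_le_one _).trans_eq (one_mul _))
        _ ≤ _ := norm_id_add_smul_le C hs.le
    nlinarith
  refine le_of_forall_pos_le_add fun ε hε ↦ ?_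
  have hK : 0 < 2 * ‖C‖ ^ 2 + 1 := by positivity
  calc RCLike.re (ψ C) ≤ numRadius 𝕜 C + ε / (2 * ‖C‖ ^ 2 + 1) * (2 * ‖C‖ ^ 2) :=
        key _ (by positivity)
    _ ≤ numRadius 𝕜 C + ε := by
        gcongr
        rw [div_mul_eq_mul_div, div_le_iff₀ hK]
        nlinarith

theorem norm_apply_le_numRadius (hψ : IsState ψ) (C : E →L[𝕜] E) :
    ‖ψ C‖ ≤ numRadius 𝕜 C := by
  obtain ⟨l, hl, hlC⟩ := RCLike.exists_norm_le_one_mul_eq_norm (ψ C)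
  calc ‖ψ C‖ = RCLike.re (ψ (l • C)) := by simp [hlC]
    _ ≤ numRadius 𝕜 (l • C) := hψ.re_apply_le_numRadius _
    _ ≤ ‖l‖ * numRadius 𝕜 C := numRadius_smul_le l C
    _ ≤ numRadius 𝕜 C := mul_le_of_le_one_left (numRadius_nonneg C) hl

end IsState

theorem numRadius_le_numRadius_of_forall_exists {F : Type*} [NormedAddCommGroup F]
    [NormedSpace 𝕜 F] (Φ : F →L[𝕜] F) (B : E →L[𝕜] E)
    (h : ∀ T : F, ‖T‖ = 1 → ∃ a : (E →L[𝕜] E) →L[𝕜] F,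
      ‖a‖ ≤ 1 ∧ a (ContinuousLinearMap.id 𝕜 E) = T ∧ a B = Φ T) :
    numRadius 𝕜 Φ ≤ numRadius 𝕜 B :=
  numRadius_le_of_forall (numRadius_nonneg B) fun T φ hT hφ hφT ↦ by
    obtain ⟨a, ha, haT, haB⟩ := h T hT
    have hψ : IsState (φ ∘L a) :=
      ⟨(opNorm_comp_le φ a).trans (by rw [hφ, one_mul]; exact ha), by simp [haT, hφT]⟩
    simpa [haB] using hψ.norm_apply_le_numRadius B

end States

theorem Submodule.smulRight_mem_of_forall_finiteDimensional {𝕜 X Y : Type*} [RCLike 𝕜]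
    [NormedAddCommGroup X] [NormedSpace 𝕜 X] [NormedAddCommGroup Y] [NormedSpace 𝕜 Y]
    {Z : Submodule 𝕜 (X →L[𝕜] Y)}
    (hfin : ∀ T : X →L[𝕜] Y, FiniteDimensional 𝕜 (LinearMap.range (T : X →ₗ[𝕜] Y)) → T ∈ Z)
    (g : X →L[𝕜] 𝕜) (y : Y) : g.smulRight y ∈ Z := by
  refine hfin _ (Submodule.finiteDimensional_of_le (S₂ := 𝕜 ∙ y) ?_)
  rintro - ⟨x, rfl⟩
  exact Submodule.smul_mem _ _ (Submodule.mem_span_singleton_self y)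

theorem ContinuousLinearMap.nontrivial_of_nontrivial_setLike {𝕜 X Y S : Type*} [RCLike 𝕜]
    [NormedAddCommGroup X] [NormedSpace 𝕜 X] [NormedAddCommGroup Y] [NormedSpace 𝕜 Y]
    [SetLike S (X →L[𝕜] Y)] (Z : S) [Nontrivial Z] : Nontrivial X ∧ Nontrivial Y := by
  obtain ⟨T, T', hTT'⟩ := exists_pair_ne Z
  obtain ⟨x, hx⟩ : ∃ x, (T : X →L[𝕜] Y) x ≠ (T' : X →L[𝕜] Y) x := by
    by_contra! h
    exact hTT' (Subtype.ext (ContinuousLinearMap.ext h))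
  exact ⟨⟨x, 0, by rintro rfl; simp at hx⟩, ⟨_, _, hx⟩⟩

/- `Z` is a `SetLike` subobject below rather than a `Submodule`: for a submodule `Z` of
`X →L[𝕜] Y`, instance search finds no operator norm on `Z →L[𝕜] Z`, because `Submodule.module`
does not unify with the module structure underlying the normed space `Z`. -/

section CodRestrict

variable {𝕜 E F S : Type*} [RCLike 𝕜] [NormedAddCommGroup E] [NormedSpace 𝕜 E]
  [NormedAddCommGroup F] [NormedSpace 𝕜 F] [SetLike S F] [AddSubgroupClass S F]
  [SMulMemClass S 𝕜 F] {Z : S}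

noncomputable def ContinuousLinearMap.codRestrictMem (f : E →L[𝕜] F) (h : ∀ x, f x ∈ Z) :
    E →L[𝕜] Z :=
  LinearMap.mkContinuous
    { toFun x := ⟨f x, h x⟩
      map_add' x y := Subtype.ext (map_add f x y)
      map_smul' c x := Subtype.ext (map_smul f c x) }
    ‖f‖ f.le_opNorm

theorem ContinuousLinearMap.norm_codRestrictMem_le (f : E →L[𝕜] F) (h : ∀ x, f x ∈ Z) :
    ‖f.codRestrictMem h‖ ≤ ‖f‖ :=
  LinearMap.mkContinuous_norm_le _ (norm_nonneg f) _

end CodRestrict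

section Composition

variable {𝕜 X Y S : Type*} [RCLike 𝕜] [NormedAddCommGroup X] [NormedSpace 𝕜 X]
  [NormedAddCommGroup Y] [NormedSpace 𝕜 Y] [SetLike S (X →L[𝕜] Y)]
  [AddSubgroupClass S (X →L[𝕜] Y)] [SMulMemClass S 𝕜 (X →L[𝕜] Y)] {Z : S}

section Right

variable (hZ : ∀ T ∈ Z, ∀ B : X →L[𝕜] X, T ∘L B ∈ Z)

noncomputable def compRightOn (B : X →L[𝕜] X) : Z →L[𝕜] Z :=
  LinearMap.mkContinuous
    { toFun T := ⟨T ∘L B, hZ T T.2 B⟩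
      map_add' T T' := Subtype.ext (add_comp (T : X →L[𝕜] Y) T' B)
      map_smul' c T := Subtype.ext (smul_comp c (T : X →L[𝕜] Y) B) }
    ‖B‖ fun T ↦ by simpa [mul_comm] using opNorm_comp_le (T : X →L[𝕜] Y) B

@[simp]
theorem coe_compRightOn_apply (B : X →L[𝕜] X) (T : Z) :
    (compRightOn hZ B T : X →L[𝕜] Y) = (T : X →L[𝕜] Y) ∘L B :=
  rfl

theorem norm_compRightOn [Nontrivial Y]
    (hrank : ∀ (g : X →L[𝕜] 𝕜) (y : Y), g.smulRight y ∈ Z) (B : X →L[𝕜] X) :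
    ‖compRightOn hZ B‖ = ‖B‖ := by
  refine le_antisymm (LinearMap.mkContinuous_norm_le _ (norm_nonneg B) _) ?_
  obtain ⟨y, hy⟩ := exists_norm_eq_one 𝕜 Y
  refine opNorm_le_bound _ (opNorm_nonneg _) fun x ↦ ?_
  obtain ⟨g, hg, hgx⟩ := exists_dual_vector'' 𝕜 (B x)
  let T : Z := ⟨g.smulRight y, hrank g y⟩
  have hT : ‖T‖ ≤ 1 := by
    simpa [T, norm_smulRight_apply, hy] using hg
  calc ‖B x‖ = ‖(compRightOn hZ B T : X →L[𝕜] Y) x‖ := by simp [T, hgx, norm_smul, hy]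
    _ ≤ ‖compRightOn hZ B T‖ * ‖x‖ := le_opNorm _ x
    _ ≤ ‖compRightOn hZ B‖ * ‖x‖ := by
        gcongr
        exact (compRightOn hZ B).le_opNorm_of_le hT |>.trans_eq (mul_one _)

theorem numRadius_compRightOn_le (B : X →L[𝕜] X) :
    numRadius 𝕜 (compRightOn hZ B) ≤ numRadius 𝕜 B := by
  refine numRadius_le_numRadius_of_forall_exists _ B fun T hT ↦
    ⟨(compL 𝕜 X X Y (T : X →L[𝕜] Y)).codRestrictMem (hZ T T.2), ?_, ?_, rfl⟩
  · refine (norm_codRestrictMem_le _ _).trans (opNorm_le_bound _ zero_le_one fun C ↦ ?_)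
    simpa [show ‖(T : X →L[𝕜] Y)‖ = 1 from hT] using opNorm_comp_le (T : X →L[𝕜] Y) C
  · ext1; simp [codRestrictMem]

end Right

section Left

variable (hZ : ∀ T ∈ Z, ∀ A : Y →L[𝕜] Y, A ∘L T ∈ Z)

noncomputable def compLeftOn (A : Y →L[𝕜] Y) : Z →L[𝕜] Z :=
  LinearMap.mkContinuous
    { toFun T := ⟨A ∘L T, hZ T T.2 A⟩
      map_add' T T' := Subtype.ext (comp_add A (T : X →L[𝕜] Y) T')
      map_smul' c T := Subtype.ext (comp_smul A c (T : X →L[𝕜] Y)) }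
    ‖A‖ fun T ↦ opNorm_comp_le A (T : X →L[𝕜] Y)

@[simp]
theorem coe_compLeftOn_apply (A : Y →L[𝕜] Y) (T : Z) :
    (compLeftOn hZ A T : X →L[𝕜] Y) = A ∘L (T : X →L[𝕜] Y) :=
  rfl

theorem norm_compLeftOn [Nontrivial X]
    (hrank : ∀ (g : X →L[𝕜] 𝕜) (y : Y), g.smulRight y ∈ Z) (A : Y →L[𝕜] Y) :
    ‖compLeftOn hZ A‖ = ‖A‖ := by
  refine le_antisymm (LinearMap.mkContinuous_norm_le _ (norm_nonneg A) _) ?_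
  obtain ⟨x, hx⟩ := exists_norm_eq_one 𝕜 X
  obtain ⟨g, hg, hgx⟩ := exists_dual_vector'' 𝕜 x
  refine opNorm_le_bound _ (opNorm_nonneg _) fun y ↦ ?_
  let T : Z := ⟨g.smulRight y, hrank g y⟩
  have hT : ‖T‖ ≤ ‖y‖ := by
    simpa [T, norm_smulRight_apply] using mul_le_mul_of_nonneg_right hg (norm_nonneg y)
  calc ‖A y‖ = ‖(compLeftOn hZ A T : X →L[𝕜] Y) x‖ := by simp [T, hgx, hx]
    _ ≤ ‖compLeftOn hZ A T‖ := by simpa [hx] using (compLeftOn hZ A T : X →L[𝕜] Y).le_opNorm x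
    _ ≤ ‖compLeftOn hZ A‖ * ‖y‖ := (compLeftOn hZ A).le_opNorm_of_le hT

theorem numRadius_compLeftOn_le (A : Y →L[𝕜] Y) :
    numRadius 𝕜 (compLeftOn hZ A) ≤ numRadius 𝕜 A := by
  refine numRadius_le_numRadius_of_forall_exists _ A fun T hT ↦
    ⟨((compL 𝕜 X Y Y).flip (T : X →L[𝕜] Y)).codRestrictMem (hZ T T.2), ?_, ?_, rfl⟩
  · refine (norm_codRestrictMem_le _ _).trans (opNorm_le_bound _ zero_le_one fun C ↦ ?_)
    simpa [show ‖(T : X →L[𝕜] Y)‖ = 1 from hT] using opNorm_comp_le C (T : X →L[𝕜] Y)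
  · ext1; simp [codRestrictMem]

end Left

end Composition

theorem numIndex_operatorIdeal_le_min_general {𝕜 X Y : Type*} [RCLike 𝕜]
    [NormedAddCommGroup X] [NormedSpace 𝕜 X]
    [NormedAddCommGroup Y] [NormedSpace 𝕜 Y]
    (Z : Submodule 𝕜 (X →L[𝕜] Y))
    (hfin : ∀ T : X →L[𝕜] Y, FiniteDimensional 𝕜 ↥(LinearMap.range (T : X →ₗ[𝕜] Y)) → T ∈ Z)
    (hideal : ∀ (A : Y →L[𝕜] Y) (B : X →L[𝕜] X), ∀ T ∈ Z, A.comp (T.comp B) ∈ Z) :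
    numIndex 𝕜 ↥Z ≤ min (numIndex 𝕜 X) (numIndex 𝕜 Y) := by
  rcases subsingleton_or_nontrivial Z with hZ | hZ
  · rw [numIndex_eq_zero_of_subsingleton]
    exact le_min numIndex_nonneg numIndex_nonneg
  obtain ⟨hX, hY⟩ := ContinuousLinearMap.nontrivial_of_nontrivial_setLike (𝕜 := 𝕜) Z
  have hrank := Z.smulRight_mem_of_forall_finiteDimensional hfin
  have hright : ∀ T ∈ Z, ∀ B : X →L[𝕜] X, T ∘L B ∈ Z := fun T hT B ↦ by
    simpa using hideal (.id 𝕜 Y) B T hT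
  have hleft : ∀ T ∈ Z, ∀ A : Y →L[𝕜] Y, A ∘L T ∈ Z := fun T hT A ↦ by
    simpa using hideal A (.id 𝕜 X) T hT
  refine le_min (numIndex_le_numIndex_of_forall_exists fun B hB ↦ ?_)
    (numIndex_le_numIndex_of_forall_exists fun A hA ↦ ?_)
  · exact ⟨compRightOn hright B, (norm_compRightOn hright hrank B).trans hB,
      numRadius_compRightOn_le hright B⟩
  · exact ⟨compLeftOn hleft A, (norm_compLeftOn hleft hrank A).trans hA,
      numRadius_compLeftOn_le hleft A⟩

/-- For every operator ideal `Z ⊆ L(X,Y)` (closed subspace, containing all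
finite-rank operators, stable by composition on both sides), `n(Z) ≤ min{n(X), n(Y)}`. -/
theorem numIndex_operatorIdeal_le_min {𝕜 X Y : Type*} [RCLike 𝕜]
    [NormedAddCommGroup X] [NormedSpace 𝕜 X] [CompleteSpace X]
    [NormedAddCommGroup Y] [NormedSpace 𝕜 Y] [CompleteSpace Y]
    (Z : Submodule 𝕜 (X →L[𝕜] Y)) (hclosed : IsClosed (Z : Set (X →L[𝕜] Y)))
    (hfin : ∀ T : X →L[𝕜] Y, FiniteDimensional 𝕜 ↥(LinearMap.range (T : X →ₗ[𝕜] Y)) → T ∈ Z)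
    (hideal : ∀ (A : Y →L[𝕜] Y) (B : X →L[𝕜] X), ∀ T ∈ Z, A.comp (T.comp B) ∈ Z) :
    numIndex 𝕜 ↥Z ≤ min (numIndex 𝕜 X) (numIndex 𝕜 Y) :=
  numIndex_operatorIdeal_le_min_general Z hfin hideal
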